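/- Let β ∈ (0,1) and let R be a real number with 0 < R < 1 - β. Then there exists a unique ρ > 0 satisfying E_0(ρ) = ρ·R, i.e., R = E_0(ρ)/ρ. -/

import Mathlib

/-!
Substituting `t = 2^(-ρ)`, which maps `ρ > 0` bijectively onto `t ∈ (0, 1)`, the equation
`E_0(ρ) = ρ R` becomes `t^R = β + (1 - β) t`. The difference `t^R - (β + (1 - β) t)` is strictly
concave on `[0, ∞)` and vanishes at `t = 1`, so it has at most one further zero. It is `-β < 0` at
`t = 0` and, by `t^R ≥ 1 + R (1 - 1/t)`, positive for `R / (1 - β) < t < 1`; the intermediate value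
theorem gives that zero in `(0, 1)`.
-/

open Real Set

/-- Base-2 Gallager function of the binary erasure channel with erasure probability `β`. -/
noncomputable def gallagerE0 (β ρ : ℝ) : ℝ := -Real.logb 2 (β + (1 - β) * 2 ^ (-ρ))

theorem StrictConcaveOn.eq_of_apply_eq_of_lt {𝕜 : Type*} [Field 𝕜] [LinearOrder 𝕜]
    [IsStrictOrderedRing 𝕜] {s : Set 𝕜} {f : 𝕜 → 𝕜} (hf : StrictConcaveOn 𝕜 s f) {x y z : 𝕜}
    (hx : x ∈ s) (hy : y ∈ s) (hz : z ∈ s) (hxz : x < z) (hyz : y < z)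
    (hfx : f x = f z) (hfy : f y = f z) : x = y := by
  rcases lt_trichotomy x y with hxy | rfl | hyx
  · have := hf.slope_anti_adjacent hx hz hxy hyz
    simp [hfx, hfy] at this
  · rfl
  · have := hf.slope_anti_adjacent hy hz hyx hxz
    simp [hfx, hfy] at this

lemma strictConcaveOn_rpow_sub_affine {p : ℝ} (hp₀ : 0 < p) (hp₁ : p < 1) (a b : ℝ) :
    StrictConcaveOn ℝ (Ici 0) (fun t : ℝ => t ^ p - (b + a * t)) := by
  have hlin : ConvexOn ℝ (Ici (0 : ℝ)) (fun t : ℝ => b + a * t) :=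
    (convexOn_const b (convex_Ici 0)).add ((LinearMap.mulLeft ℝ a).convexOn (convex_Ici 0))
  exact (strictConcaveOn_rpow hp₀ hp₁).sub_convexOn hlin

lemma one_add_mul_one_sub_inv_le_rpow {t p : ℝ} (ht : 0 < t) (hp : 0 ≤ p) :
    1 + p * (1 - t⁻¹) ≤ t ^ p :=
  calc 1 + p * (1 - t⁻¹) ≤ p * log t + 1 := by
        nlinarith [one_sub_inv_le_log_of_pos ht]
    _ ≤ exp (p * log t) := add_one_le_exp _
    _ = t ^ p := by rw [rpow_def_of_pos ht, mul_comm]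

lemma add_mul_lt_rpow {β p t : ℝ} (hp : 0 ≤ p) (ht₀ : 0 < t) (ht₁ : t < 1)
    (h : p < (1 - β) * t) : β + (1 - β) * t < t ^ p := by
  have hgap : 1 + p * (1 - t⁻¹) - (β + (1 - β) * t) = (1 - t) * ((1 - β) * t - p) / t := by
    field_simp
    ring
  have : 0 < 1 + p * (1 - t⁻¹) - (β + (1 - β) * t) := by
    rw [hgap]
    exact div_pos (mul_pos (sub_pos.2 ht₁) (sub_pos.2 h)) ht₀
  linarith [one_add_mul_one_sub_inv_le_rpow ht₀ hp]

lemma existsUnique_rpow_eq_add_mul {β p : ℝ} (hβ : 0 < β) (hp : 0 < p) (hpβ : p < 1 - β) :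
    ∃! t, t ∈ Ioo 0 1 ∧ t ^ p = β + (1 - β) * t := by
  set φ : ℝ → ℝ := fun t => t ^ p - (β + (1 - β) * t) with hφ
  have hφ_conc : StrictConcaveOn ℝ (Ici 0) φ :=
    strictConcaveOn_rpow_sub_affine hp (by linarith) _ _
  have hroot : ∀ t, t ^ p = β + (1 - β) * t ↔ φ t = 0 := fun t => sub_eq_zero.symm
  simp_rw [hroot]
  obtain ⟨c, hpc, hc₁⟩ := exists_between ((div_lt_one (by linarith)).2 hpβ)
  have hc₀ : 0 < c := (div_pos hp (by linarith)).trans hpc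
  have hφc : 0 < φ c :=
    sub_pos.2 <| add_mul_lt_rpow hp.le hc₀ hc₁ <| by rwa [div_lt_iff₀' (by linarith)] at hpc
  have hφ₀ : φ 0 = -β := by simp [hφ, zero_rpow hp.ne']
  have hφ_cont : ContinuousOn φ (Icc 0 c) :=
    (continuousOn_id.rpow_const fun _ _ => Or.inr hp.le).sub (by fun_prop)
  obtain ⟨t, ht, hφt⟩ :=
    intermediate_value_Ioo hc₀.le hφ_cont ⟨by rw [hφ₀]; linarith, hφc⟩
  have hφ₁ : φ 1 = 0 := by simp [hφ]
  refine ⟨t, ⟨⟨ht.1, ht.2.trans hc₁⟩, hφt⟩, fun s ⟨hs, hφs⟩ => ?_⟩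
  exact hφ_conc.eq_of_apply_eq_of_lt hs.1.le ht.1.le (mem_Ici.2 zero_le_one) hs.2 (ht.2.trans hc₁)
    (hφs.trans hφ₁.symm) (hφt.trans hφ₁.symm)

lemma existsUnique_pos_of_existsUnique_rpow_neg {b : ℝ} (hb : 1 < b) {P : ℝ → Prop}
    (h : ∃! t, t ∈ Ioo 0 1 ∧ P t) : ∃! ρ : ℝ, 0 < ρ ∧ P (b ^ (-ρ)) := by
  obtain ⟨t, ⟨ht, hPt⟩, huniq⟩ := h
  have hb₀ : 0 < b := zero_lt_one.trans hb
  refine ⟨-logb b t, ⟨neg_pos.2 (logb_neg hb ht.1 ht.2), ?_⟩, ?_⟩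
  · rwa [neg_neg, rpow_logb hb₀ hb.ne' ht.1]
  · rintro ρ ⟨hρ, hPρ⟩
    have := huniq _ ⟨⟨rpow_pos_of_pos hb₀ _, rpow_lt_one_of_one_lt_of_neg hb (neg_neg_of_pos hρ)⟩,
      hPρ⟩
    rw [← this, logb_rpow hb₀ hb.ne', neg_neg]

lemma gallagerE0_eq_mul_iff {β ρ R : ℝ} (h : 0 < β + (1 - β) * 2 ^ (-ρ)) :
    gallagerE0 β ρ = ρ * R ↔ ((2 : ℝ) ^ (-ρ)) ^ R = β + (1 - β) * 2 ^ (-ρ) := by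
  rw [gallagerE0, neg_eq_iff_eq_neg, logb_eq_iff_rpow_eq two_pos (by norm_num) h,
    ← rpow_mul zero_le_two, neg_mul]

theorem unique_rho_solution (β R : ℝ) (hβ : β ∈ Set.Ioo (0 : ℝ) 1)
    (hR : 0 < R) (hR' : R < 1 - β) :
    ∃! ρ : ℝ, 0 < ρ ∧ gallagerE0 β ρ = ρ * R := by
  have hpos (ρ : ℝ) : 0 < β + (1 - β) * (2 : ℝ) ^ (-ρ) :=
    add_pos hβ.1 (mul_pos (sub_pos.2 hβ.2) (rpow_pos_of_pos two_pos _))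
  simp_rw [gallagerE0_eq_mul_iff (hpos _)]
  exact existsUnique_pos_of_existsUnique_rpow_neg one_lt_two
    (existsUnique_rpow_eq_add_mul hβ.1 hR hR')
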